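/- For every integrable real-valued random variable ξ, the doubly filtered estimate ξ̌̂ := 𝔼[𝔼[ξ | 𝒢¹] | 𝒢²] is left fixed by conditioning on either information set: 𝔼[ξ̌̂ | 𝒢¹] = ξ̌̂ and 𝔼[ξ̌̂ | 𝒢²] = ξ̌̂ ℙ-almost surely. -/

import Mathlib

/-!
Since `ℬ` is independent of `𝒜 ⊔ 𝒞`, conditioning an `𝒜 ⊔ 𝒞`-measurable variable on `ℬ ⊔ 𝒞`
is the same as conditioning it on `𝒞`: both have the same integrals over the rectangles
`b ∩ c` (`b ∈ ℬ`, `c ∈ 𝒞`), a π-system generating `ℬ ⊔ 𝒞`. Hence the doubly filtered estimate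
agrees a.s. with `𝔼[𝔼[ξ | 𝒢¹] | 𝒞]`, which is measurable for both `𝒢¹` and `𝒢²`, so
conditioning on either leaves it fixed.
-/

open MeasureTheory ProbabilityTheory

theorem IsPiSystem.image2_inter {α : Type*} {C D : Set (Set α)} (hC : IsPiSystem C)
    (hD : IsPiSystem D) : IsPiSystem (Set.image2 (· ∩ ·) C D) := by
  rintro _ ⟨s₁, hs₁, t₁, ht₁, rfl⟩ _ ⟨s₂, hs₂, t₂, ht₂, rfl⟩ hst
  rw [Set.inter_inter_inter_comm] at hst ⊢
  exact Set.mem_image2_of_mem (hC _ hs₁ _ hs₂ (hst.mono Set.inter_subset_left))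
    (hD _ ht₁ _ ht₂ (hst.mono Set.inter_subset_right))

theorem MeasurableSpace.sup_eq_generateFrom_image2_inter {α : Type*}
    (m₁ m₂ : MeasurableSpace α) : m₁ ⊔ m₂ = generateFrom
      (Set.image2 (· ∩ ·) {s | MeasurableSet[m₁] s} {t | MeasurableSet[m₂] t}) := by
  refine le_antisymm (sup_le ?_ ?_) ?_
  · exact fun s hs ↦ measurableSet_generateFrom
      ⟨s, hs, Set.univ, MeasurableSet.univ, Set.inter_univ s⟩
  · exact fun t ht ↦ measurableSet_generateFrom
      ⟨Set.univ, MeasurableSet.univ, t, ht, Set.univ_inter t⟩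
  · refine generateFrom_le ?_
    rintro _ ⟨s, hs, t, ht, rfl⟩
    exact (le_sup_left (b := m₂) s hs).inter (le_sup_right (a := m₁) t ht)

theorem ProbabilityTheory.iIndep.indep_sup_of_ne {Ω ι : Type*} {mΩ : MeasurableSpace Ω}
    {μ : Measure Ω} {m : ι → MeasurableSpace Ω} (h_le : ∀ i, m i ≤ mΩ) (h : iIndep m μ)
    {i j k : ι} (hij : i ≠ j) (hkj : k ≠ j) : Indep (m i ⊔ m k) (m j) μ := by
  have hdisj : Disjoint ({i, k} : Set ι) {j} := by simp [hij.symm, hkj.symm]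
  simpa only [iSup_insert, iSup_singleton] using indep_iSup_of_disjoint h_le h hdisj

section
variable {Ω E : Type*} [NormedAddCommGroup E] [NormedSpace ℝ E]
  {m₁ m₂ m₃ mΩ : MeasurableSpace Ω} {μ : Measure Ω} {f g : Ω → E}

theorem setIntegral_eq_of_isPiSystem {m : MeasurableSpace Ω} {p : Set (Set Ω)} (hm : m ≤ mΩ)
    (h_gen : m = MeasurableSpace.generateFrom p) (h_pi : IsPiSystem p)
    (hf : Integrable f μ) (hg : Integrable g μ) (h_univ : ∫ x, f x ∂μ = ∫ x, g x ∂μ)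
    (hp : ∀ s ∈ p, ∫ x in s, f x ∂μ = ∫ x in s, g x ∂μ) {s : Set Ω} (hs : MeasurableSet[m] s) :
    ∫ x in s, f x ∂μ = ∫ x in s, g x ∂μ := by
  induction s, hs using MeasurableSpace.induction_on_inter h_gen h_pi with
  | empty => simp
  | basic t ht => exact hp t ht
  | compl t ht ih =>
    rw [setIntegral_compl (hm t ht) hf, setIntegral_compl (hm t ht) hg, ih, h_univ]
  | iUnion t hdisj ht ih =>
    have ht' i := hm _ (ht i)
    rw [integral_iUnion ht' hdisj hf.integrableOn, integral_iUnion ht' hdisj hg.integrableOn]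
    exact tsum_congr ih

variable [CompleteSpace E] [IsFiniteMeasure μ]

theorem setIntegral_inter_of_indep (hm₁ : m₁ ≤ mΩ) (hm₂ : m₂ ≤ mΩ) (hindep : Indep m₁ m₂ μ)
    (hf : StronglyMeasurable[m₁] f) (hf_int : Integrable f μ) {b c : Set Ω}
    (hb : MeasurableSet[m₂] b) (hc : MeasurableSet[m₁] c) :
    ∫ x in b ∩ c, f x ∂μ = μ.real b • ∫ x in c, f x ∂μ := by
  have hc' : MeasurableSet c := hm₁ c hc
  calc ∫ x in b ∩ c, f x ∂μ
      = ∫ x in b, c.indicator f x ∂μ := (setIntegral_indicator hc').symm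
    _ = ∫ x in b, μ[c.indicator f | m₂] x ∂μ :=
        (setIntegral_condExp hm₂ (hf_int.indicator hc') hb).symm
    _ = ∫ _ in b, ∫ x, c.indicator f x ∂μ ∂μ :=
        setIntegral_congr_ae (hm₂ b hb) <| (condExp_indep_eq hm₁ hm₂
          (hf.indicator hc) hindep).mono fun _ hx _ ↦ hx
    _ = μ.real b • ∫ x in c, f x ∂μ := by rw [setIntegral_const, integral_indicator hc']

theorem condExp_sup_indep_eq (hm₁ : m₁ ≤ mΩ) (hm₂ : m₂ ≤ mΩ) (h₃₁ : m₃ ≤ m₁)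
    (hindep : Indep m₁ m₂ μ) (hf : StronglyMeasurable[m₁] f) :
    μ[f | m₂ ⊔ m₃] =ᵐ[μ] μ[f | m₃] := by
  by_cases hf_int : Integrable f μ
  swap; · simp only [condExp_of_not_integrable hf_int]; rfl
  have hm₃ : m₃ ≤ mΩ := h₃₁.trans hm₁
  have hrect : ∀ s ∈ Set.image2 (· ∩ ·) {b | MeasurableSet[m₂] b} {c | MeasurableSet[m₃] c},
      ∫ x in s, μ[f | m₃] x ∂μ = ∫ x in s, f x ∂μ := by
    rintro _ ⟨b, hb, c, hc, rfl⟩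
    have hg : StronglyMeasurable[m₁] (μ[f | m₃]) := stronglyMeasurable_condExp.mono h₃₁
    rw [setIntegral_inter_of_indep hm₁ hm₂ hindep hg integrable_condExp hb (h₃₁ c hc),
      setIntegral_inter_of_indep hm₁ hm₂ hindep hf hf_int hb (h₃₁ c hc),
      setIntegral_condExp hm₃ hf_int hc]
  refine (ae_eq_condExp_of_forall_setIntegral_eq (sup_le hm₂ hm₃) hf_int
    (fun _ _ _ ↦ integrable_condExp.integrableOn) (fun s hs _ ↦ ?_)
    (stronglyMeasurable_condExp.mono (le_sup_right : m₃ ≤ m₂ ⊔ m₃)).aestronglyMeasurable).symm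
  exact setIntegral_eq_of_isPiSystem (sup_le hm₂ hm₃)
    (MeasurableSpace.sup_eq_generateFrom_image2_inter m₂ m₃)
    (IsPiSystem.image2_inter (fun _ hs _ ht _ ↦ hs.inter ht) (fun _ hs _ ht _ ↦ hs.inter ht))
    integrable_condExp hf_int (integral_condExp hm₃) hrect hs

end

theorem doubly_filtered_estimate_fixed_general
    {Ω : Type*} {mΩ : MeasurableSpace Ω} {μ : Measure Ω} [IsProbabilityMeasure μ]
    (𝒜 ℬ 𝒞 : MeasurableSpace Ω)
    (h𝒜 : 𝒜 ≤ mΩ) (hℬ : ℬ ≤ mΩ) (h𝒞 : 𝒞 ≤ mΩ)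
    (hindep : ProbabilityTheory.iIndep ![𝒜, ℬ, 𝒞] μ)
    (ξ : Ω → ℝ) :
    μ[ (μ[ (μ[ξ | 𝒜 ⊔ 𝒞]) | ℬ ⊔ 𝒞]) | 𝒜 ⊔ 𝒞] =ᵐ[μ] μ[ (μ[ξ | 𝒜 ⊔ 𝒞]) | ℬ ⊔ 𝒞]
      ∧ μ[ (μ[ (μ[ξ | 𝒜 ⊔ 𝒞]) | ℬ ⊔ 𝒞]) | ℬ ⊔ 𝒞] =ᵐ[μ] μ[ (μ[ξ | 𝒜 ⊔ 𝒞]) | ℬ ⊔ 𝒞] := by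
  have h_le : ∀ i, ![𝒜, ℬ, 𝒞] i ≤ mΩ := fun i ↦ by fin_cases i <;> assumption
  have h_indep : Indep (𝒜 ⊔ 𝒞) ℬ μ := hindep.indep_sup_of_ne h_le (i := 0) (j := 1) (k := 2)
    (by decide) (by decide)
  set η := μ[ξ | 𝒜 ⊔ 𝒞]
  have hη : μ[η | ℬ ⊔ 𝒞] =ᵐ[μ] μ[η | 𝒞] :=
    condExp_sup_indep_eq (sup_le h𝒜 h𝒞) hℬ le_sup_right h_indep stronglyMeasurable_condExp
  refine ⟨condExp_of_aestronglyMeasurable' (sup_le h𝒜 h𝒞) ?_ integrable_condExp,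
    (condExp_of_stronglyMeasurable (sup_le hℬ h𝒞) stronglyMeasurable_condExp
      integrable_condExp).eventuallyEq⟩
  exact ⟨μ[η | 𝒞], stronglyMeasurable_condExp.mono le_sup_right, hη⟩

/-- For every integrable real random variable `ξ`, the doubly filtered
estimate `ξ̌̂ := 𝔼[𝔼[ξ | 𝒢¹] | 𝒢²]` (with `𝒢¹ = 𝒜 ⊔ 𝒞`, `𝒢² = ℬ ⊔ 𝒞`) is left fixed by
conditioning on either information set: `𝔼[ξ̌̂ | 𝒢¹] = ξ̌̂` and `𝔼[ξ̌̂ | 𝒢²] = ξ̌̂` ℙ-a.s. -/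
theorem doubly_filtered_estimate_fixed
    {Ω : Type*} {mΩ : MeasurableSpace Ω} {μ : Measure Ω} [IsProbabilityMeasure μ]
    (𝒜 ℬ 𝒞 : MeasurableSpace Ω)
    (h𝒜 : 𝒜 ≤ mΩ) (hℬ : ℬ ≤ mΩ) (h𝒞 : 𝒞 ≤ mΩ)
    (hindep : ProbabilityTheory.iIndep ![𝒜, ℬ, 𝒞] μ)
    (ξ : Ω → ℝ) (hξ : Integrable ξ μ) :
    μ[ (μ[ (μ[ξ | 𝒜 ⊔ 𝒞]) | ℬ ⊔ 𝒞]) | 𝒜 ⊔ 𝒞] =ᵐ[μ] μ[ (μ[ξ | 𝒜 ⊔ 𝒞]) | ℬ ⊔ 𝒞]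
      ∧ μ[ (μ[ (μ[ξ | 𝒜 ⊔ 𝒞]) | ℬ ⊔ 𝒞]) | ℬ ⊔ 𝒞] =ᵐ[μ] μ[ (μ[ξ | 𝒜 ⊔ 𝒞]) | ℬ ⊔ 𝒞] :=
  doubly_filtered_estimate_fixed_general 𝒜 ℬ 𝒞 h𝒜 hℬ h𝒞 hindep ξ
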